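/- arXiv:2103.03035 — 5 statements merged into one kernel-verified Lean document; each statement's English description precedes it below -/
import Mathlib

section
/- Let G be chordal, S ⊆ V(G), and let X, Y ⊆ V(G) be disjoint with G[Y] an S-forest. Define X' = X \ {u ∈ X \ S : Y ∩ N(u) ⊆ Y \ S}. Then for any Y' with Y ∩ N(X') ⊆ Y' ⊆ Y, a set U ⊆ X satisfies that G[U ∪ Y] is an S-forest if and only if G[U ∪ Y'] is an S-forest; hence the maximum-weight such U is the same for Y and Y'. -/
/-- An induced subgraph `G[F]` is an `S`-forest if it contains no cycle
through a vertex of `S`. -/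
def IsSForest {V : Type*} (G : SimpleGraph V) (S : Set V) (F : Set V) : Prop :=
  ¬ ∃ v : F, (v : V) ∈ S ∧ ∃ c : (G.induce F).Walk v v, c.IsCycle

/-- A graph is chordal if every cycle of length at least 4 has a chord. -/
def IsChordal {V : Type*} (G : SimpleGraph V) : Prop :=
  ∀ ⦃v : V⦄ (c : G.Walk v v), c.IsCycle → 4 ≤ c.length →
    ∃ a b : V, a ∈ c.support ∧ b ∈ c.support ∧ G.Adj a b ∧ s(a, b) ∉ c.edges

open SimpleGraph

section Helpers

variable {V : Type*} {G : SimpleGraph V}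

lemma length_one_mem_edges {u v : V} {p : G.Walk u v} (h : p.length = 1) :
    s(u, v) ∈ p.edges := by
  cases p with
  | nil => simp at h
  | cons hadj q =>
    cases q with
    | nil => simp
    | cons h2 r => simp [Walk.length_cons] at h

lemma length_rotate [DecidableEq V] {u v : V} (c : G.Walk v v) (h : u ∈ c.support) :
    (c.rotate u h).length = c.length := by
  rw [Walk.rotate, Walk.length_append, add_comm, ← Walk.length_append, Walk.take_spec]

lemma mem_support_rotate [DecidableEq V] {u v x : V} (c : G.Walk v v) (h : u ∈ c.support) :
    x ∈ (c.rotate u h).support ↔ x ∈ c.support := by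
  rw [← Walk.mem_verts_toSubgraph, Walk.toSubgraph_rotate, Walk.mem_verts_toSubgraph]

lemma sforest_mono {S F₁ F₂ : Set V} (h : F₁ ⊆ F₂) (hF : IsSForest G S F₂) :
    IsSForest G S F₁ := by
  rintro ⟨v, hvS, c, hc⟩
  refine hF ⟨⟨(v : V), h v.2⟩, hvS, ?_⟩
  let f : G.induce F₁ →g G.induce F₂ :=
    ⟨Set.inclusion h, fun {a b} hab => by simpa using hab⟩
  have hinj : Function.Injective (f : F₁ → F₂) := Set.inclusion_injective h
  exact ⟨c.map f, hc.map hinj⟩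

lemma triangle_not_sforest {S F : Set V} {x y z : V}
    (hx : x ∈ F) (hy : y ∈ F) (hz : z ∈ F) (hxS : x ∈ S)
    (hxy : G.Adj x y) (hyz : G.Adj y z) (hzx : G.Adj z x) : ¬ IsSForest G S F := by
  intro hF
  apply hF
  refine ⟨⟨x, hx⟩, hxS, ?_⟩
  have axy : (G.induce F).Adj ⟨x, hx⟩ ⟨y, hy⟩ := by simpa using hxy
  have ayz : (G.induce F).Adj ⟨y, hy⟩ ⟨z, hz⟩ := by simpa using hyz
  have azx : (G.induce F).Adj ⟨z, hz⟩ ⟨x, hx⟩ := by simpa using hzx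
  refine ⟨Walk.cons axy (Walk.cons ayz (Walk.cons azx Walk.nil)), ?_⟩
  rw [Walk.cons_isCycle_iff]
  have hxy' : x ≠ y := hxy.ne
  have hyz' : y ≠ z := hyz.ne
  have hzx' : z ≠ x := hzx.ne
  constructor
  · rw [Walk.isPath_def]
    simp [Subtype.ext_iff, hxy', hyz', hzx', hxy'.symm, hyz'.symm, hzx'.symm]
  · simp [Subtype.ext_iff, Sym2.eq_iff, hxy', hyz', hzx',
      hxy'.symm, hyz'.symm, hzx'.symm]

lemma no_cycle_of_no_triangle (hG : IsChordal G) {S F : Set V}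
    (hF : ∀ x y z : V, x ∈ F → y ∈ F → z ∈ F → x ∈ S →
      G.Adj x y → G.Adj y z → G.Adj z x → False) :
    ∀ n : ℕ, ∀ v : V, v ∈ S → ∀ c : G.Walk v v, c.IsCycle → c.length ≤ n →
      (∀ x ∈ c.support, x ∈ F) → False := by
  classical
  intro n
  induction n with
  | zero =>
    intro v hv c hc hlen _
    have := hc.three_le_length
    omega
  | succ n ih =>
    intro v hv c hc hlen hsupp
    by_cases h3 : c.length = 3
    · cases c with
      | nil => simp at h3
      | cons h p =>
        cases p with
        | nil => simp at h3
        | cons h2 q =>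
          cases q with
          | nil => simp at h3
          | cons h3' r =>
            cases r with
            | nil =>
              exact hF v _ _ (hsupp v (by simp)) (hsupp _ (by simp))
                (hsupp _ (by simp)) hv h h2 h3'
            | cons h4 r' => simp [Walk.length_cons] at h3
    · have h4 : 4 ≤ c.length := by
        have := hc.three_le_length; omega
      obtain ⟨a, b, ha, hb, hadj, hne⟩ := hG c hc h4
      have hc1 : (c.rotate a ha).IsCycle := hc.rotate ha
      set c1 := c.rotate a ha with hc1def
      have hlen1 : c1.length = c.length := length_rotate c ha
      have hmem : ∀ x, x ∈ c1.support ↔ x ∈ c.support := fun x => mem_support_rotate c ha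
      have hedg : ∀ e, e ∈ c1.edges ↔ e ∈ c.edges := fun e => (c.rotate_edges a ha).perm.mem_iff
      have hb1 : b ∈ c1.support := (hmem b).mpr hb
      have hba : b ≠ a := hadj.ne'
      set t := c1.takeUntil b hb1 with htdef
      set d := c1.dropUntil b hb1 with hddef
      have hspec : t.append d = c1 := c1.take_spec hb1
      have hsupp1 : c1.support = t.support ++ d.support.tail := by
        rw [← hspec, Walk.support_append]
      have hts : t.support = a :: t.support.tail := t.support_eq_cons
      have hds : d.support = b :: d.support.tail := d.support_eq_cons
      have htail : c1.support.tail = t.support.tail ++ d.support.tail := by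
        rw [hsupp1, hts]
        simp
      have hnd : c1.support.tail.Nodup := hc1.2
      rw [htail, List.nodup_append] at hnd
      obtain ⟨hnd1, hnd2, hdisj⟩ := hnd
      have hbt : b ∈ t.support.tail := by
        have hbm : b ∈ t.support := t.end_mem_support
        rw [hts] at hbm
        rcases List.mem_cons.mp hbm with h' | h'
        · exact absurd h' hba
        · exact h'
      have had : a ∈ d.support.tail := by
        have ham : a ∈ d.support := d.end_mem_support
        rw [hds] at ham
        rcases List.mem_cons.mp ham with h' | h'
        · exact absurd h'.symm hba
        · exact h'
      have htp : t.IsPath := by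
        rw [Walk.isPath_def, hts, List.nodup_cons]
        exact ⟨fun hmem' => hdisj a hmem' a had rfl, hnd1⟩
      have hdp : d.IsPath := by
        rw [Walk.isPath_def, hds, List.nodup_cons]
        exact ⟨fun hmem' => hdisj b hbt b hmem' rfl, hnd2⟩
      have hab_t : s(a, b) ∉ t.edges := fun h' =>
        hne ((hedg _).mp (c1.edges_takeUntil_subset hb1 h'))
      have hab_d : s(a, b) ∉ d.edges := fun h' =>
        hne ((hedg _).mp (c1.edges_dropUntil_subset hb1 h'))
      have hlent : t.length + d.length = c.length := by
        have := congrArg Walk.length hspec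
        rw [Walk.length_append] at this
        rw [this, hlen1]
      have ht0 : t.length ≠ 0 := fun h0 => hba (Walk.eq_of_length_eq_zero h0).symm
      have ht1 : t.length ≠ 1 := fun h1 => hab_t (length_one_mem_edges h1)
      have hd0 : d.length ≠ 0 := fun h0 => hba (Walk.eq_of_length_eq_zero h0)
      have hd1 : d.length ≠ 1 := fun h1 => hab_d (by
        have := length_one_mem_edges h1
        rwa [Sym2.eq_swap] at this)
      have hFc1 : ∀ x ∈ c1.support, x ∈ F := fun x hx => hsupp x ((hmem x).mp hx)
      have hv_loc : v ∈ t.support ∨ v ∈ d.support := by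
        have hvc1 : v ∈ c1.support := (hmem v).mpr c.start_mem_support
        rw [hsupp1, List.mem_append] at hvc1
        exact hvc1.imp id List.mem_of_mem_tail
      rcases hv_loc with hvt | hvd
      · set cyc := Walk.cons hadj.symm t with hcycdef
        have hcycC : cyc.IsCycle := by
          rw [hcycdef, Walk.cons_isCycle_iff]
          exact ⟨htp, by rwa [Sym2.eq_swap] at hab_t⟩
        have hvc : v ∈ cyc.support := by
          rw [hcycdef, Walk.support_cons]
          exact List.mem_cons_of_mem _ hvt
        have hFcyc : ∀ x ∈ cyc.support, x ∈ F := by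
          intro x hx
          rw [hcycdef, Walk.support_cons] at hx
          rcases List.mem_cons.mp hx with h' | h'
          · exact h' ▸ hFc1 b hb1
          · exact hFc1 x (c1.support_takeUntil_subset hb1 h')
        refine ih v hv (cyc.rotate v hvc) (hcycC.rotate hvc) ?_ ?_
        · rw [length_rotate]
          have : cyc.length = t.length + 1 := by rw [hcycdef, Walk.length_cons]
          omega
        · intro x hx
          exact hFcyc x ((mem_support_rotate cyc hvc).mp hx)
      · set cyc := Walk.cons hadj d with hcycdef
        have hcycC : cyc.IsCycle := by
          rw [hcycdef, Walk.cons_isCycle_iff]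
          exact ⟨hdp, hab_d⟩
        have hvc : v ∈ cyc.support := by
          rw [hcycdef, Walk.support_cons]
          exact List.mem_cons_of_mem _ hvd
        have hFcyc : ∀ x ∈ cyc.support, x ∈ F := by
          intro x hx
          rw [hcycdef, Walk.support_cons] at hx
          rcases List.mem_cons.mp hx with h' | h'
          · exact h' ▸ hFc1 a ((hmem a).mpr ha)
          · exact hFc1 x (c1.support_dropUntil_subset hb1 h')
        refine ih v hv (cyc.rotate v hvc) (hcycC.rotate hvc) ?_ ?_
        · rw [length_rotate]
          have : cyc.length = d.length + 1 := by rw [hcycdef, Walk.length_cons]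
          omega
        · intro x hx
          exact hFcyc x ((mem_support_rotate cyc hvc).mp hx)

lemma sforest_of_no_triangle (hG : IsChordal G) {S F : Set V}
    (hF : ∀ x y z : V, x ∈ F → y ∈ F → z ∈ F → x ∈ S →
      G.Adj x y → G.Adj y z → G.Adj z x → False) :
    IsSForest G S F := by
  rintro ⟨v, hvS, c, hc⟩
  let f : G.induce F ↪g G := Embedding.induce F
  have hc' : (c.map f.toHom).IsCycle := hc.map f.injective
  refine no_cycle_of_no_triangle hG hF (c.map f.toHom).length (v : V) hvS
    (c.map f.toHom) hc' le_rfl ?_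
  intro x hx
  change x ∈ (c.map f.toHom).support at hx
  rw [Walk.support_map, List.mem_map] at hx
  obtain ⟨y, _, rfl⟩ := hx
  exact y.2

end Helpers

/-- Replacing `Y` by any `Y'` between `Y ∩ N(X')` and `Y`, where
`X' = X \ {u ∈ X \ S : Y ∩ N(u) ⊆ Y \ S}`, preserves which sets `U ⊆ X`
give `S`-forests. -/
theorem stmt2 {V : Type*} (G : SimpleGraph V) (hG : IsChordal G) (S : Set V)
    (X Y : Set V) (hXY : Disjoint X Y) (hY : IsSForest G S Y)
    (Y' : Set V)
    (hY'1 : Y ∩ (⋃ x ∈ X \ {u | u ∈ X \ S ∧ Y ∩ G.neighborSet u ⊆ Y \ S},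
      G.neighborSet x) ⊆ Y')
    (hY'2 : Y' ⊆ Y)
    (U : Set V) (hU : U ⊆ X) :
    IsSForest G S (U ∪ Y) ↔ IsSForest G S (U ∪ Y') := by
  constructor
  · exact fun h => sforest_mono (Set.union_subset_union_right U hY'2) h
  · intro h2
    apply sforest_of_no_triangle hG
    intro x y z hx hy hz hxS hxy hyz hzx
    -- helper: a `Y`-neighbor of a good `U`-vertex is in `Y'`
    have hX' : ∀ u w, u ∈ U → w ∈ Y → G.Adj u w →
        (u ∈ S ∨ ∃ w2, w2 ∈ Y ∧ w2 ∈ S ∧ G.Adj u w2) → w ∈ Y' := by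
      intro u w hu hw hadj hcase
      apply hY'1
      refine ⟨hw, ?_⟩
      rw [Set.mem_iUnion₂]
      refine ⟨u, ⟨hU hu, ?_⟩, hadj⟩
      rintro ⟨⟨-, huS⟩, hsub⟩
      rcases hcase with h' | ⟨w2, hw2Y, hw2S, hw2adj⟩
      · exact huS h'
      · exact (hsub ⟨hw2Y, hw2adj⟩).2 hw2S
    have noUY' := fun hx' hy' hz' =>
      triangle_not_sforest hx' hy' hz' hxS hxy hyz hzx h2
    rcases hx with hxU | hxY <;> rcases hy with hyU | hyY <;> rcases hz with hzU | hzY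
    · exact noUY' (Or.inl hxU) (Or.inl hyU) (Or.inl hzU)
    · exact noUY' (Or.inl hxU) (Or.inl hyU)
        (Or.inr (hX' x z hxU hzY hzx.symm (Or.inl hxS)))
    · exact noUY' (Or.inl hxU)
        (Or.inr (hX' x y hxU hyY hxy (Or.inl hxS))) (Or.inl hzU)
    · exact noUY' (Or.inl hxU)
        (Or.inr (hX' x y hxU hyY hxy (Or.inl hxS)))
        (Or.inr (hX' x z hxU hzY hzx.symm (Or.inl hxS)))
    · exact noUY'
        (Or.inr (hX' y x hyU hxY hxy.symm (Or.inr ⟨x, hxY, hxS, hxy.symm⟩)))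
        (Or.inl hyU) (Or.inl hzU)
    · exact noUY'
        (Or.inr (hX' y x hyU hxY hxy.symm (Or.inr ⟨x, hxY, hxS, hxy.symm⟩)))
        (Or.inl hyU)
        (Or.inr (hX' y z hyU hzY hyz (Or.inr ⟨x, hxY, hxS, hxy.symm⟩)))
    · exact noUY'
        (Or.inr (hX' z x hzU hxY hzx (Or.inr ⟨x, hxY, hxS, hzx⟩)))
        (Or.inr (hX' z y hzU hyY hyz.symm (Or.inr ⟨x, hxY, hxS, hzx⟩)))
        (Or.inl hzU)
    · exact triangle_not_sforest hxY hyY hzY hxS hxy hyz hzx hY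
end

section
/- In a tree model on a rooted host tree realizing a graph G, for every vertex u, every neighbor in G of any vertex of V_u = {u' : u' ≤ u} lying outside V_u is a neighbor of u; that is, N(V_u) ⊆ N(u). -/
/-- Descendant order in a rooted tree given by a parent function
(edges directed toward the root). -/
def Desc {N : Type*} (parent : N → N) : N → N → Prop :=
  Relation.ReflTransGen (fun a b => b = parent a)

/-- A tree model of a graph `G` on a rooted host tree: each vertex `v`
corresponds to a subtree `Sub v` with root `root v` (the node of `Sub v`
closest to the root of the host tree), and adjacency in `G` is exactly
intersection of the subtrees. -/
structure TreeModel (V N : Type*) where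
  parent : N → N
  acyclic : ∀ x y : N, Desc parent x y → Desc parent y x → x = y
  G : SimpleGraph V
  Sub : V → Set N
  root : V → N
  root_mem : ∀ v : V, root v ∈ Sub v
  root_max : ∀ v : V, ∀ x ∈ Sub v, Desc parent x (root v)
  convex : ∀ v : V, ∀ x y : N, x ∈ Sub v → Desc parent x y →
    Desc parent y (root v) → y ∈ Sub v
  adj_iff : ∀ u v : V, u ≠ v → (G.Adj u v ↔ (Sub u ∩ Sub v).Nonempty)

namespace TreeModel

variable {V N : Type*}

/-- `u ≤ v` iff `r(u)` is a descendant of `r(v)`. -/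
def vle (M : TreeModel V N) (u v : V) : Prop :=
  Desc M.parent (M.root u) (M.root v)

/-- `u < v` iff `r(u)` is a strict descendant of `r(v)`. -/
def vlt (M : TreeModel V N) (u v : V) : Prop :=
  M.vle u v ∧ M.root u ≠ M.root v

/-- `V_u = {w : w ≤ u}`. -/
def Vset (M : TreeModel V N) (u : V) : Set V := {w | M.vle w u}

/-- The maximal proper predecessors `◁u` of `u`. -/
def maxPreds (M : TreeModel V N) (u : V) : Set V :=
  {w | w ∈ M.Vset u \ {u} ∧ ∀ z ∈ M.Vset u \ {u}, M.vle w z → z = w}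

end TreeModel

lemma desc_comparable {N : Type*} (parent : N → N) :
    ∀ {x y : N}, Desc parent x y → ∀ {z : N}, Desc parent x z →
      Desc parent y z ∨ Desc parent z y := by
  intro x y hxy
  induction hxy using Relation.ReflTransGen.head_induction_on with
  | refl => intro z hz; exact Or.inl hz
  | head hstep _ ih =>
    rename_i a c _
    intro z hz
    rcases Relation.ReflTransGen.cases_head hz with rfl | ⟨c', hc', hrest⟩
    · exact Or.inr (Relation.ReflTransGen.head hstep (by assumption))
    · subst hstep; subst hc'; exact ih hrest

/-- `N(V_u) ⊆ N(u)`: every vertex outside `V_u` adjacent to some vertex of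
`V_u` is adjacent to `u`. -/
theorem stmt6 {V N : Type*} (M : TreeModel V N) (u : V) :
    ∀ w : V, w ∉ M.Vset u → (∃ a ∈ M.Vset u, M.G.Adj a w) → M.G.Adj u w := by
  intro w hw ⟨a, ha, haw⟩
  have hne : u ≠ w := fun h => hw (h ▸ Relation.ReflTransGen.refl)
  have hane : a ≠ w := fun h => hw (h ▸ ha)
  obtain ⟨x, hxa, hxw⟩ := (M.adj_iff a w hane).mp haw
  -- x descends to root a, which descends to root u
  have hxu : Desc M.parent x (M.root u) :=
    Relation.ReflTransGen.trans (M.root_max a x hxa) ha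
  have hxrw : Desc M.parent x (M.root w) := M.root_max w x hxw
  rcases desc_comparable M.parent hxu hxrw with h | h
  · -- root u descends to root w : root u ∈ Sub w by convexity
    have hmem : M.root u ∈ M.Sub w := M.convex w x (M.root u) hxw hxu h
    exact (M.adj_iff u w hne).mpr ⟨M.root u, M.root_mem u, hmem⟩
  · exact absurd h hw
end

section
/- In a tree model on a rooted host tree realizing a graph G, for every vertex u the sets V_{u'} for u' ranging over the maximal proper predecessors of u form a partition of V_u \ {u}, and these parts are pairwise disconnected in G (no edge of G joins two different parts). -/
lemma desc_total' {N : Type*} {parent : N → N} {a b c : N}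
    (hab : Desc parent a b) (hac : Desc parent a c) :
    Desc parent b c ∨ Desc parent c b := by
  induction hab using Relation.ReflTransGen.head_induction_on generalizing c with
  | refl => exact Or.inl hac
  | head h' h ih =>
    rcases hac.cases_head with rfl | ⟨d, hd, hdc⟩
    · exact Or.inr (Relation.ReflTransGen.head h' h)
    · subst hd; subst h'; exact ih hdc

namespace TreeModel

variable {V N : Type*}

lemma vle_refl (M : TreeModel V N) (a : V) : M.vle a a :=
  Relation.ReflTransGen.refl

lemma vle_trans (M : TreeModel V N) {a b c : V} (h1 : M.vle a b)
    (h2 : M.vle b c) : M.vle a c :=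
  Relation.ReflTransGen.trans h1 h2

lemma vle_antisymm (M : TreeModel V N) (hexp : Function.Injective M.root)
    {a b : V} (h1 : M.vle a b) (h2 : M.vle b a) : a = b :=
  hexp (M.acyclic _ _ h1 h2)

lemma vle_total_of (M : TreeModel V N) {x a b : V} (h1 : M.vle x a)
    (h2 : M.vle x b) : M.vle a b ∨ M.vle b a :=
  desc_total' h1 h2

end TreeModel

/-- In an expanded tree model (distinct vertices have distinct roots), the
sets `V_{u'}` over the maximal proper predecessors `u'` of `u` partition
`V_u \ {u}` into pairwise disconnected sets. -/
theorem stmt7 {V N : Type*} [Finite V] (M : TreeModel V N)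
    (hexp : Function.Injective M.root) (u : V) :
    (∀ w ∈ M.maxPreds u, M.Vset w ⊆ M.Vset u \ {u}) ∧
    (∀ x ∈ M.Vset u \ {u}, ∃! w : V, w ∈ M.maxPreds u ∧ x ∈ M.Vset w) ∧
    (∀ w1 ∈ M.maxPreds u, ∀ w2 ∈ M.maxPreds u, w1 ≠ w2 →
      ∀ a ∈ M.Vset w1, ∀ b ∈ M.Vset w2, a ≠ b ∧ ¬ M.G.Adj a b) := by
  -- Two distinct maximal proper predecessors have no common predecessor.
  have key : ∀ w1 ∈ M.maxPreds u, ∀ w2 ∈ M.maxPreds u, w1 ≠ w2 →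
      ∀ c : V, M.vle c w1 → M.vle c w2 → False := by
    rintro w1 ⟨hw1, hmax1⟩ w2 ⟨hw2, hmax2⟩ hne c hc1 hc2
    rcases M.vle_total_of hc1 hc2 with h | h
    · exact hne (hmax1 w2 hw2 h).symm
    · exact hne (hmax2 w1 hw1 h)
  -- Part 1.
  have part1 : ∀ w ∈ M.maxPreds u, M.Vset w ⊆ M.Vset u \ {u} := by
    rintro w ⟨⟨hwu, hwne⟩, _⟩ x hx
    refine ⟨M.vle_trans hx hwu, ?_⟩
    rintro rfl
    exact hwne (Set.mem_singleton_iff.mpr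
      (M.vle_antisymm hexp hwu hx))
  refine ⟨part1, ?_, ?_⟩
  · -- Part 2: existence and uniqueness.
    rintro x ⟨hxu, hxne⟩
    -- strict "above" relation, well-founded since V is finite
    set r : V → V → Prop := fun z w => M.vle w z ∧ w ≠ z with hr
    haveI : IsTrans V r := ⟨by
      rintro a b c ⟨h1, h1'⟩ ⟨h2, h2'⟩
      refine ⟨M.vle_trans h2 h1, ?_⟩
      rintro rfl
      exact h1' (M.vle_antisymm hexp h1 h2)⟩
    haveI : IsIrrefl V r := ⟨by rintro a ⟨_, h⟩; exact h rfl⟩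
    have hwf : WellFounded r := Finite.wellFounded_of_trans_of_irrefl r
    obtain ⟨w, ⟨⟨hwu, hwne⟩, hxw⟩, hmin⟩ :=
      hwf.has_min {z | z ∈ M.Vset u \ {u} ∧ M.vle x z}
        ⟨x, ⟨hxu, hxne⟩, M.vle_refl x⟩
    have hwmax : w ∈ M.maxPreds u := by
      refine ⟨⟨hwu, hwne⟩, fun z hz hwz => ?_⟩
      by_contra hne
      exact hmin z ⟨hz, M.vle_trans hxw hwz⟩ ⟨hwz, fun h => hne h.symm⟩
    refine ⟨w, ⟨hwmax, hxw⟩, ?_⟩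
    rintro y ⟨hy, hxy⟩
    by_contra hne
    exact key y hy w hwmax hne x hxy hxw
  · -- Part 3: pairwise disconnected.
    intro w1 hw1 w2 hw2 hne a ha b hb
    constructor
    · rintro rfl
      exact key w1 hw1 w2 hw2 hne a ha hb
    · intro hadj
      have hab : a ≠ b := by
        rintro rfl
        exact key w1 hw1 w2 hw2 hne a ha hb
      obtain ⟨x, hxa, hxb⟩ := (M.adj_iff a b hab).mp hadj
      have h1 : Desc M.parent x (M.root a) := M.root_max a x hxa
      have h2 : Desc M.parent x (M.root b) := M.root_max b x hxb
      rcases desc_total' h1 h2 with h | h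
      · exact key w1 hw1 w2 hw2 hne a ha (M.vle_trans h hb)
      · exact key w1 hw1 w2 hw2 hne b (M.vle_trans h ha) hb
end

section
/- In a tree model on a rooted host tree realizing a chordal graph G, for every vertex u and every Y ⊆ V(G) disjoint from V_u \ {u}, the partition of V_u \ {u} into the sets V_{u'} over maximal proper predecessors u' of u is nice: every S-triangle of G[(V_u \ {u}) ∪ Y] has its intersection with V_u \ {u} contained in a single part V_{u'}. -/
/-- Two descendants chains from the same node are comparable. -/
lemma desc_total {N : Type*} {parent : N → N} {x y z : N}
    (hy : Desc parent x y) (hz : Desc parent x z) :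
    Desc parent y z ∨ Desc parent z y := by
  revert hz
  induction hy using Relation.ReflTransGen.head_induction_on with
  | refl => exact fun hz => Or.inl hz
  | head hstep htail ih =>
    intro hz
    rcases Relation.ReflTransGen.cases_head hz with rfl | ⟨b', hb', hz'⟩
    · exact Or.inr (Relation.ReflTransGen.head hstep htail)
    · subst hb'
      exact ih (by rw [hstep]; exact hz')

/-- In a finite type, a reflexive transitive antisymmetric relation has
maximal elements above any element of any set. -/
lemma exists_max_above {α : Type*} [Finite α] (r : α → α → Prop)
    (hrefl : ∀ p, r p p)
    (htrans : ∀ {p q s}, r p q → r q s → r p s)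
    (hanti : ∀ p q, r p q → r q p → p = q)
    (P : Set α) (a : α) (ha : a ∈ P) :
    ∃ w ∈ P, r a w ∧ ∀ z ∈ P, r w z → z = w := by
  classical
  let s : α → α → Prop := fun z w => r w z ∧ ¬ r z w
  haveI : IsTrans α s := ⟨by
    rintro p q t ⟨h1, h2⟩ ⟨h3, h4⟩
    exact ⟨htrans h3 h1, fun h => h4 (htrans h1 h)⟩⟩
  haveI : IsIrrefl α s := ⟨by rintro p ⟨h1, h2⟩; exact h2 h1⟩
  have hwf : WellFounded s := Finite.wellFounded_of_trans_of_irrefl s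
  obtain ⟨m, ⟨hmP, ham⟩, hmin⟩ :=
    hwf.has_min {z | z ∈ P ∧ r a z} ⟨a, ha, hrefl a⟩
  refine ⟨m, hmP, ham, ?_⟩
  intro z hzP hmz
  have hzT : z ∈ {z | z ∈ P ∧ r a z} := ⟨hzP, htrans ham hmz⟩
  have := hmin z hzT
  have hzm : r z m := by
    by_contra h
    exact this ⟨hmz, h⟩
  exact hanti z m hzm hmz

/-- The partition of `V_u \ {u}` into the sets `V_{u'}`, `u' ∈ ◁u`, is nice:
every `S`-triangle of `G[(V_u \ {u}) ∪ Y]` has its intersection with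
`V_u \ {u}` contained in a single part. -/
theorem stmt8 {V N : Type*} [Finite V] (M : TreeModel V N)
    (hexp : Function.Injective M.root) (S : Set V) (u : V)
    (Y : Set V) (hY : Disjoint Y (M.Vset u \ {u}))
    (a b c : V)
    (ha : a ∈ (M.Vset u \ {u}) ∪ Y) (hb : b ∈ (M.Vset u \ {u}) ∪ Y)
    (hc : c ∈ (M.Vset u \ {u}) ∪ Y)
    (hab : M.G.Adj a b) (hbc : M.G.Adj b c) (hac : M.G.Adj a c)
    (hS : a ∈ S ∨ b ∈ S ∨ c ∈ S)
    (hmeet : (({a, b, c} : Set V) ∩ (M.Vset u \ {u})).Nonempty) :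
    ∃ w ∈ M.maxPreds u, ({a, b, c} : Set V) ∩ (M.Vset u \ {u}) ⊆ M.Vset w := by
  classical
  set X : Set V := M.Vset u \ {u} with hXdef
  have hYX : ∀ y ∈ Y, y ∉ X := fun y hy hx => Set.disjoint_left.mp hY hy hx
  have hrefl : ∀ p : V, M.vle p p := fun p => Relation.ReflTransGen.refl
  have htrans : ∀ {p q s : V}, M.vle p q → M.vle q s → M.vle p s :=
    fun h1 h2 => Relation.ReflTransGen.trans h1 h2
  have hanti : ∀ p q : V, M.vle p q → M.vle q p → p = q :=
    fun p q h1 h2 => hexp (M.acyclic _ _ h1 h2)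
  have cmp : ∀ p q : V, M.G.Adj p q → M.vle p q ∨ M.vle q p := by
    intro p q h
    obtain ⟨x, hxp, hxq⟩ := (M.adj_iff p q h.ne).mp h
    exact desc_total (M.root_max p x hxp) (M.root_max q x hxq)
  have hmax2 : ∀ p q : V, M.G.Adj p q →
      ∃ m, (m = p ∨ m = q) ∧ M.vle p m ∧ M.vle q m := by
    intro p q h
    rcases cmp p q h with h' | h'
    · exact ⟨q, Or.inr rfl, h', hrefl q⟩
    · exact ⟨p, Or.inl rfl, hrefl p, h'⟩
  have key : ∃ m ∈ X, (a ∈ X → M.vle a m) ∧ (b ∈ X → M.vle b m) ∧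
      (c ∈ X → M.vle c m) := by
    by_cases haX : a ∈ X <;> by_cases hbX : b ∈ X <;> by_cases hcX : c ∈ X
    · -- all three in X
      obtain ⟨m1, hm1, ham1, hbm1⟩ := hmax2 a b hab
      have hm1c : M.G.Adj m1 c := by rcases hm1 with rfl | rfl <;> assumption
      obtain ⟨m, hm, hm1m, hcm⟩ := hmax2 m1 c hm1c
      have hmX : m ∈ X := by
        rcases hm with rfl | rfl
        · rcases hm1 with rfl | rfl <;> assumption
        · exact hcX
      exact ⟨m, hmX, fun _ => htrans ham1 hm1m, fun _ => htrans hbm1 hm1m,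
        fun _ => hcm⟩
    · obtain ⟨m, hm, ham, hbm⟩ := hmax2 a b hab
      have hmX : m ∈ X := by rcases hm with rfl | rfl <;> assumption
      exact ⟨m, hmX, fun _ => ham, fun _ => hbm, fun h => absurd h hcX⟩
    · obtain ⟨m, hm, ham, hcm⟩ := hmax2 a c hac
      have hmX : m ∈ X := by rcases hm with rfl | rfl <;> assumption
      exact ⟨m, hmX, fun _ => ham, fun h => absurd h hbX, fun _ => hcm⟩
    · exact ⟨a, haX, fun _ => hrefl a, fun h => absurd h hbX,
        fun h => absurd h hcX⟩
    · obtain ⟨m, hm, hbm, hcm⟩ := hmax2 b c hbc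
      have hmX : m ∈ X := by rcases hm with rfl | rfl <;> assumption
      exact ⟨m, hmX, fun h => absurd h haX, fun _ => hbm, fun _ => hcm⟩
    · exact ⟨b, hbX, fun h => absurd h haX, fun _ => hrefl b,
        fun h => absurd h hcX⟩
    · exact ⟨c, hcX, fun h => absurd h haX, fun h => absurd h hbX,
        fun _ => hrefl c⟩
    · exfalso
      obtain ⟨x, hx1, hx2⟩ := hmeet
      rcases hx1 with rfl | rfl | rfl
      exacts [haX hx2, hbX hx2, hcX hx2]
  obtain ⟨m, hmX, ham, hbm, hcm⟩ := key
  obtain ⟨w, hwX, hmw, hwmax⟩ :=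
    exists_max_above M.vle hrefl (fun h1 h2 => htrans h1 h2) hanti X m hmX
  refine ⟨w, ⟨hwX, hwmax⟩, ?_⟩
  rintro x ⟨hx1, hx2⟩
  have hxm : M.vle x m := by
    rcases hx1 with rfl | rfl | rfl
    exacts [ham hx2, hbm hx2, hcm hx2]
  exact htrans hxm hmw
end

section
/- Let G be a chordal graph and S ⊆ V(G). An induced subgraph F of G is an S-forest (contains no cycle through a vertex of S) if and only if F contains no triangle with a vertex in S. -/
open SimpleGraph Walk

lemma aux_end_mem_tail_support {V : Type*} {G : SimpleGraph V} {x y : V}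
    (p : G.Walk x y) (h : ¬ p.Nil) : y ∈ p.support.tail := by
  cases p with
  | nil => simp at h
  | cons h q => simp [Walk.end_mem_support]

lemma aux_not_nil_of_ne {V : Type*} {G : SimpleGraph V} {x y : V}
    (p : G.Walk x y) (h : x ≠ y) : ¬ p.Nil := by
  cases p with
  | nil => exact absurd rfl h
  | cons h q => simp

lemma aux_edge_mem_of_length_one {V : Type*} {G : SimpleGraph V} {x y : V}
    (p : G.Walk x y) (h : p.length = 1) : s(x, y) ∈ p.edges := by
  match p with
  | .nil => simp at h
  | .cons hadj .nil => simp
  | .cons _ (.cons _ _) => simp [Walk.length_cons] at h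

lemma aux_length_rotate {V : Type*} [DecidableEq V] {G : SimpleGraph V} {x y : V}
    (c : G.Walk x x) (h : y ∈ c.support) : (c.rotate y h).length = c.length := by
  have h1 := (c.rotate_edges y h).perm.length_eq
  rwa [Walk.length_edges, Walk.length_edges] at h1

/-- In a chordal graph, every cycle through `v` yields a triangle through `v`. -/
lemma aux_triangle_of_cycle {W : Type*} [DecidableEq W] {H : SimpleGraph W}
    (hH : IsChordal H) :
    ∀ n (v : W) (c : H.Walk v v), c.IsCycle → c.length ≤ n →
      ∃ x y : W, H.Adj v x ∧ H.Adj x y ∧ H.Adj v y := by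
  intro n
  induction n with
  | zero => intro v c hc hl; have := hc.three_le_length; omega
  | succ n ih =>
    intro v c hc hl
    have h3 := hc.three_le_length
    by_cases h3' : c.length = 3
    · -- triangle
      refine ⟨c.getVert 1, c.getVert 2, ?_, ?_, ?_⟩
      · have := c.adj_getVert_succ (i := 0) (by omega)
        simpa using this
      · exact c.adj_getVert_succ (i := 1) (by omega)
      · have := c.adj_getVert_succ (i := 2) (by omega)
        have h4 : c.getVert 3 = v := by
          rw [← h3']; exact c.getVert_length
        rw [h4] at this
        exact this.symm
    · -- chord case
      have h4 : 4 ≤ c.length := by omega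
      obtain ⟨a, b, ha, hb, hab, hchord⟩ := hH c hc h4
      -- rotate c to start at a
      set d := c.rotate a ha with hd
      have hdc : d.IsCycle := hc.rotate ha
      have hdlen : d.length = c.length := aux_length_rotate c ha
      have hne : a ≠ b := hab.ne
      have hvtail : v ∈ c.support.tail := by
        cases c with
        | nil => exact absurd rfl hc.ne_nil
        | cons h q => simp [Walk.end_mem_support]
      have hbtail : b ∈ c.support.tail := by
        rcases (Walk.mem_support_iff c).mp hb with h | h
        · rw [h]; exact hvtail
        · exact h
      have hrot := c.support_rotate a ha
      have hvd : v ∈ d.support := by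
        have : v ∈ d.support.tail := hrot.mem_iff.mpr hvtail
        exact List.mem_of_mem_tail this
      have hbd : b ∈ d.support := by
        have : b ∈ d.support.tail := hrot.mem_iff.mpr hbtail
        exact List.mem_of_mem_tail this
      have hchordd : s(a, b) ∉ d.edges := by
        intro hmem
        exact hchord (((c.rotate_edges a ha).perm.mem_iff).mp hmem)
      -- split d at b
      set d1 := d.takeUntil b hbd with hd1
      set d2 := d.dropUntil b hbd with hd2
      have hspec : d1.append d2 = d := d.take_spec hbd
      have hlen12 : d1.length + d2.length = d.length := by
        have := congrArg Walk.length hspec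
        rwa [Walk.length_append] at this
      have htail : d.support.tail = d1.support.tail ++ d2.support.tail := by
        conv_lhs => rw [← hspec]
        exact Walk.tail_support_append d1 d2
      have hnodup : (d1.support.tail ++ d2.support.tail).Nodup := by
        rw [← htail]; exact hdc.support_nodup
      have hd1nil : ¬ d1.Nil := aux_not_nil_of_ne d1 hne
      have hd2nil : ¬ d2.Nil := aux_not_nil_of_ne d2 hne.symm
      -- d1 is a path
      have hd1path : d1.IsPath := by
        rw [Walk.isPath_def, Walk.support_eq_cons, List.nodup_cons]
        refine ⟨?_, (List.nodup_append.mp hnodup).1⟩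
        intro hmem
        have hamem : a ∈ d2.support.tail := aux_end_mem_tail_support d2 hd2nil
        exact (List.nodup_append.mp hnodup).2.2 a hmem a hamem rfl
      have hd2path : d2.IsPath := by
        rw [Walk.isPath_def, Walk.support_eq_cons, List.nodup_cons]
        refine ⟨?_, (List.nodup_append.mp hnodup).2.1⟩
        intro hmem
        have hbmem : b ∈ d1.support.tail := aux_end_mem_tail_support d1 hd1nil
        exact (List.nodup_append.mp hnodup).2.2 b hbmem b hmem rfl
      have hd1e : s(a, b) ∉ d1.edges := fun h => hchordd (d.edges_takeUntil_subset hbd h)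
      have hd2e : s(a, b) ∉ d2.edges := fun h => hchordd (d.edges_dropUntil_subset hbd h)
      have hd1len : 2 ≤ d1.length := by
        have h1 : d1.length ≠ 0 := by
          intro h0
          exact hd1nil (Walk.nil_iff_length_eq.mpr h0)
        have h2 : d1.length ≠ 1 := by
          intro h1'
          exact hd1e (aux_edge_mem_of_length_one d1 h1')
        omega
      have hd2len : 2 ≤ d2.length := by
        have h1 : d2.length ≠ 0 := by
          intro h0
          exact hd2nil (Walk.nil_iff_length_eq.mpr h0)
        have h2 : d2.length ≠ 1 := by
          intro h1'
          have := aux_edge_mem_of_length_one d2 h1'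
          rw [Sym2.eq_swap] at this
          exact hd2e this
        omega
      -- v lies on one side
      have hvsplit : v ∈ d1.support ∨ v ∈ d2.support := by
        have : v ∈ d1.support ++ d2.support.tail := by
          rw [← Walk.support_append, hspec]; exact hvd
        rcases List.mem_append.mp this with h | h
        · exact Or.inl h
        · exact Or.inr (List.mem_of_mem_tail h)
      rcases hvsplit with hv1 | hv2
      · -- cycle: cons (hab.symm) d1 : Walk b b
        set e := Walk.cons hab.symm d1 with he
        have hec : e.IsCycle := by
          rw [Walk.cons_isCycle_iff]
          exact ⟨hd1path, by rwa [Sym2.eq_swap]⟩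
        have hve : v ∈ e.support := by simp [he, Walk.support_cons, hv1]
        have helen : (e.rotate v hve).length ≤ n := by
          rw [aux_length_rotate e hve]
          simp only [he, Walk.length_cons]
          omega
        exact ih v (e.rotate v hve) (hec.rotate hve) helen
      · -- cycle: cons hab d2 : Walk a a
        set e := Walk.cons hab d2 with he
        have hec : e.IsCycle := by
          rw [Walk.cons_isCycle_iff]
          exact ⟨hd2path, hd2e⟩
        have hve : v ∈ e.support := by simp [he, Walk.support_cons, hv2]
        have helen : (e.rotate v hve).length ≤ n := by
          rw [aux_length_rotate e hve]
          simp only [he, Walk.length_cons]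
          omega
        exact ih v (e.rotate v hve) (hec.rotate hve) helen

lemma aux_chordal_induce {V : Type*} {G : SimpleGraph V} (hG : IsChordal G)
    (F : Set V) : IsChordal (G.induce F) := by
  intro v c hc h4
  set f : G.induce F ↪g G := SimpleGraph.Embedding.induce F with hf
  have hinj : Function.Injective f := f.injective
  set c' := c.map f.toHom with hc'
  have hcc' : c'.IsCycle := hc.map hinj
  have hlen : c'.length = c.length := Walk.length_map _ _
  obtain ⟨a, b, ha, hb, hab, hchord⟩ := hG c' hcc' (by rwa [hlen])
  rw [hc', Walk.support_map, List.mem_map] at ha hb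
  obtain ⟨a', ha', rfl⟩ := ha
  obtain ⟨b', hb', rfl⟩ := hb
  refine ⟨a', b', ha', hb', ?_, ?_⟩
  · exact hab
  · intro hmem
    apply hchord
    rw [hc', Walk.edges_map]
    exact List.mem_map_of_mem hmem

lemma aux_cycle_of_triangle {W : Type*} {H : SimpleGraph W} {u v w : W}
    (h1 : H.Adj u v) (h2 : H.Adj v w) (h3 : H.Adj w u) :
    ∃ c : H.Walk u u, c.IsCycle := by
  refine ⟨Walk.cons h1 (Walk.cons h2 (Walk.cons h3 Walk.nil)), ?_⟩
  rw [Walk.cons_isCycle_iff]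
  constructor
  · rw [Walk.isPath_def]
    simp only [Walk.support_cons, Walk.support_nil]
    have huv := h1.ne
    have hvw := h2.ne
    have hwu := h3.ne
    simp_all [List.nodup_cons]
    tauto
  · simp only [Walk.edges_cons, Walk.edges_nil, List.mem_cons, List.not_mem_nil, or_false]
    push_neg
    constructor
    · intro h
      rw [Sym2.eq_iff] at h
      rcases h with ⟨h', _⟩ | ⟨h', _⟩
      · exact h1.ne h'
      · exact h3.ne h'.symm
    · intro h
      rw [Sym2.eq_iff] at h
      rcases h with ⟨h', _⟩ | ⟨_, h'⟩
      · exact h3.ne h'.symm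
      · exact h2.ne h'

/-- In a chordal graph, an induced subgraph is an `S`-forest iff it
contains no triangle with a vertex in `S`. -/
theorem stmt17 {V : Type*} (G : SimpleGraph V) (hG : IsChordal G)
    (S : Set V) (F : Set V) :
    IsSForest G S F ↔
      ¬ ∃ a b c : V, a ∈ F ∧ b ∈ F ∧ c ∈ F ∧
        G.Adj a b ∧ G.Adj b c ∧ G.Adj a c ∧ (a ∈ S ∨ b ∈ S ∨ c ∈ S) := by
  classical
  constructor
  · rintro hforest ⟨a, b, c, haF, hbF, hcF, hab, hbc, hac, hS⟩
    set a' : F := ⟨a, haF⟩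
    set b' : F := ⟨b, hbF⟩
    set c' : F := ⟨c, hcF⟩
    have hab' : (G.induce F).Adj a' b' := hab
    have hbc' : (G.induce F).Adj b' c' := hbc
    have hac' : (G.induce F).Adj a' c' := hac
    rcases hS with hs | hs | hs
    · obtain ⟨w, hw⟩ := aux_cycle_of_triangle hab' hbc' hac'.symm
      exact hforest ⟨a', hs, w, hw⟩
    · obtain ⟨w, hw⟩ := aux_cycle_of_triangle hab'.symm hac' hbc'.symm
      exact hforest ⟨b', hs, w, hw⟩
    · obtain ⟨w, hw⟩ := aux_cycle_of_triangle hac'.symm hab' hbc'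
      exact hforest ⟨c', hs, w, hw⟩
  · rintro htri ⟨v, hvS, w, hw⟩
    obtain ⟨x, y, h1, h2, h3⟩ :=
      aux_triangle_of_cycle (aux_chordal_induce hG F) w.length v w hw le_rfl
    exact htri ⟨↑v, ↑x, ↑y, v.2, x.2, y.2, h1, h2, h3, Or.inl hvS⟩
end
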